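/- Let K_{1,n−1} be the star graph on n ≥ 3 vertices with hub vertex 1, adjacency matrix A, and cos θ_{pq} = (e^A)_{pq}/√((e^A)_{pp}(e^A)_{qq}). Then for every leaf q ≠ 1: cos² θ_{1q} = tanh²(√(n−1)) / ( (n−2)·sech(√(n−1)) + 1 ); and for every pair of distinct leaves p ≠ 1, q ≠ 1: cos θ_{pq} = (cosh(√(n−1)) − 1) / (cosh(√(n−1)) + n − 2). -/

import Mathlib

/-! The star's adjacency matrix is `A = h lᵀ + l hᵀ`, where `h` is the indicator of the hub and `l`
that of the leaves. Since `h ⬝ l = 0`, `h ⬝ h = 1` and `l ⬝ l = n - 1`, it satisfies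
`A³ = (n - 1) A`, so splitting the exponential series into even and odd powers gives
`e^A = 1 + (sinh s / s) A + ((cosh s - 1) / s²) A²` with `s = √(n - 1)`. The entries of `e^A`,
and hence the communicability angles, can be read off from this closed form. -/

open Matrix

/-- The adjacency matrix of the star graph `K_{1,n−1}` on vertex set `{1, …, n}` (vertex `p`
is represented by the index `p - 1 : Fin n`): the hub, vertex `1` (index `0`), is adjacent
to every other vertex and there are no other edges. -/
def starAdj (n : ℕ) : Matrix (Fin n) (Fin n) ℝ :=
  Matrix.of fun p q => if (p.1 = 0 ∧ q.1 ≠ 0) ∨ (q.1 = 0 ∧ p.1 ≠ 0) then 1 else 0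

/-- The cosine of the communicability angle of the star graph `K_{1,n−1}`:
`cos θ_{pq} = G_{pq}/√(G_{pp} G_{qq})` with `G = e^A`. -/
noncomputable def starCos (n : ℕ) (p q : Fin n) : ℝ :=
  NormedSpace.exp (starAdj n) p q
    / Real.sqrt (NormedSpace.exp (starAdj n) p p * NormedSpace.exp (starAdj n) q q)

open NormedSpace Real
open scoped Nat

theorem pow_odd_of_pow_three_eq_smul {R 𝔸 : Type*} [CommSemiring R] [Semiring 𝔸] [Algebra R 𝔸]
    {a : 𝔸} {c : R} (ha : a ^ 3 = c • a) (k : ℕ) : a ^ (2 * k + 1) = c ^ k • a := by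
  induction k with
  | zero => simp
  | succ k ih =>
    rw [show 2 * (k + 1) + 1 = 2 * k + 3 by ring, pow_add, ha, mul_smul_comm, ← pow_succ, ih,
      smul_smul, pow_succ']

theorem pow_even_of_pow_three_eq_smul {R 𝔸 : Type*} [CommSemiring R] [Semiring 𝔸] [Algebra R 𝔸]
    {a : 𝔸} {c : R} (ha : a ^ 3 = c • a) (k : ℕ) : a ^ (2 * k + 2) = c ^ k • a ^ 2 := by
  rw [pow_succ, pow_odd_of_pow_three_eq_smul ha, smul_mul_assoc, ← sq]

theorem exp_eq_of_pow_three_eq_smul {𝔸 : Type*} [NormedRing 𝔸] [NormedAlgebra ℝ 𝔸]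
    [CompleteSpace 𝔸] {a : 𝔸} {s : ℝ} (hs : s ≠ 0) (ha : a ^ 3 = s ^ 2 • a) :
    exp a = 1 + (sinh s / s) • a + ((cosh s - 1) / s ^ 2) • a ^ 2 := by
  have hodd : HasSum (fun k => ((2 * k + 1)! : ℝ)⁻¹ • a ^ (2 * k + 1)) ((sinh s / s) • a) := by
    convert ((hasSum_sinh s).div_const s).smul_const a using 2 with k
    rw [pow_odd_of_pow_three_eq_smul ha, smul_smul, ← pow_mul, pow_succ]
    field_simp
  have heven_tail : HasSum (fun k => ((2 * (k + 1))! : ℝ)⁻¹ • a ^ (2 * (k + 1)))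
      (((cosh s - 1) / s ^ 2) • a ^ 2) := by
    have hcosh_tail : HasSum (fun k => s ^ (2 * (k + 1)) / (2 * (k + 1))!) (cosh s - 1) := by
      simpa using (hasSum_nat_add_iff' 1).2 (hasSum_cosh s)
    convert (hcosh_tail.div_const (s ^ 2)).smul_const (a ^ 2) using 2 with k
    rw [mul_add, mul_one, pow_even_of_pow_three_eq_smul ha, smul_smul, ← pow_mul]
    congr 1
    field_simp
    ring
  have heven : HasSum (fun k => ((2 * k)! : ℝ)⁻¹ • a ^ (2 * k))
      (1 + ((cosh s - 1) / s ^ 2) • a ^ 2) := by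
    convert HasSum.zero_add (f := fun k => ((2 * k)! : ℝ)⁻¹ • a ^ (2 * k)) heven_tail using 2
    simp
  refine (exp_series_hasSum_exp' (𝕂 := ℝ) a).unique ?_
  rw [add_right_comm]
  exact heven.even_add_odd hodd

namespace Matrix

variable {m α : Type*} [Fintype m] [DecidableEq m] [CommRing α] {x y : m → α}

theorem vecMulVec_add_vecMulVec_sq (h : x ⬝ᵥ y = 0) :
    (vecMulVec x y + vecMulVec y x) ^ 2 = (y ⬝ᵥ y) • vecMulVec x x + (x ⬝ᵥ x) • vecMulVec y y := by
  rw [sq, add_mul, mul_add, mul_add]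
  simp only [vecMulVec_mul_vecMulVec, h, dotProduct_comm y x, zero_smul, vecMulVec_zero,
    vecMulVec_smul]
  abel

theorem vecMulVec_add_vecMulVec_pow_three (h : x ⬝ᵥ y = 0) :
    (vecMulVec x y + vecMulVec y x) ^ 3
      = ((x ⬝ᵥ x) * (y ⬝ᵥ y)) • (vecMulVec x y + vecMulVec y x) := by
  rw [pow_succ, vecMulVec_add_vecMulVec_sq h, add_mul, mul_add, mul_add]
  simp only [smul_mul, vecMulVec_mul_vecMulVec, h, dotProduct_comm y x, zero_smul, vecMulVec_zero,
    vecMulVec_smul, smul_zero, smul_add, smul_smul]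
  rw [mul_comm (y ⬝ᵥ y)]
  abel

theorem exp_eq_of_pow_three_eq_smul {A : Matrix m m ℝ} {s : ℝ} (hs : s ≠ 0)
    (hA : A ^ 3 = s ^ 2 • A) :
    exp A = 1 + (sinh s / s) • A + ((cosh s - 1) / s ^ 2) • A ^ 2 :=
  -- `exp` only sees the topology, which every matrix norm induces, so any one will do.
  letI : NormedRing (Matrix m m ℝ) := Matrix.linftyOpNormedRing
  letI : NormedAlgebra ℝ (Matrix m m ℝ) := Matrix.linftyOpNormedAlgebra
  _root_.exp_eq_of_pow_three_eq_smul hs hA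

end Matrix

def starHub (n : ℕ) : Fin n → ℝ := fun p => if p.1 = 0 then 1 else 0

def starLeaves (n : ℕ) : Fin n → ℝ := fun p => if p.1 = 0 then 0 else 1

theorem starAdj_eq_vecMulVec (n : ℕ) :
    starAdj n = vecMulVec (starHub n) (starLeaves n) + vecMulVec (starLeaves n) (starHub n) := by
  ext p q
  by_cases hp : p.1 = 0 <;> by_cases hq : q.1 = 0 <;>
    simp [starAdj, starHub, starLeaves, vecMulVec_apply, hp, hq]

theorem starHub_dotProduct_starLeaves (n : ℕ) : starHub n ⬝ᵥ starLeaves n = 0 :=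
  Finset.sum_eq_zero fun p _ => by by_cases hp : p.1 = 0 <;> simp [starHub, starLeaves, hp]

theorem sum_starHub {n : ℕ} (hn : 0 < n) : ∑ p, starHub n p = 1 := by
  rw [Finset.sum_eq_single (⟨0, hn⟩ : Fin n)]
  · simp [starHub]
  · intro p _ hp
    simpa [starHub, Fin.ext_iff] using hp
  · simp

theorem starHub_dotProduct_self {n : ℕ} (hn : 0 < n) : starHub n ⬝ᵥ starHub n = 1 := by
  rw [← sum_starHub hn]
  exact Finset.sum_congr rfl fun p _ => by by_cases hp : p.1 = 0 <;> simp [starHub, hp]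

theorem starLeaves_dotProduct_self {n : ℕ} (hn : 0 < n) :
    starLeaves n ⬝ᵥ starLeaves n = (n : ℝ) - 1 := by
  have hleaf : ∀ p, starLeaves n p * starLeaves n p = 1 - starHub n p := fun p => by
    by_cases hp : p.1 = 0 <;> simp [starHub, starLeaves, hp]
  simp only [dotProduct, hleaf, Finset.sum_sub_distrib, sum_starHub hn]
  simp

theorem starAdj_sq {n : ℕ} (hn : 0 < n) :
    starAdj n ^ 2 = ((n : ℝ) - 1) • vecMulVec (starHub n) (starHub n)
      + vecMulVec (starLeaves n) (starLeaves n) := by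
  rw [starAdj_eq_vecMulVec, vecMulVec_add_vecMulVec_sq (starHub_dotProduct_starLeaves n),
    starLeaves_dotProduct_self hn, starHub_dotProduct_self hn, one_smul]

theorem starAdj_pow_three {n : ℕ} (hn : 0 < n) : starAdj n ^ 3 = ((n : ℝ) - 1) • starAdj n := by
  rw [starAdj_eq_vecMulVec, vecMulVec_add_vecMulVec_pow_three (starHub_dotProduct_starLeaves n),
    starLeaves_dotProduct_self hn, starHub_dotProduct_self hn, one_mul]

theorem exp_starAdj_apply {n : ℕ} (hn : 2 ≤ n) (p q : Fin n) :
    exp (starAdj n) p q = (1 : Matrix (Fin n) (Fin n) ℝ) p q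
      + sinh √((n : ℝ) - 1) / √((n : ℝ) - 1) * starAdj n p q
      + (cosh √((n : ℝ) - 1) - 1) / ((n : ℝ) - 1)
        * (((n : ℝ) - 1) * starHub n p * starHub n q + starLeaves n p * starLeaves n q) := by
  have hpos : (0 : ℝ) < (n : ℝ) - 1 := sub_pos.2 (Nat.one_lt_cast.2 hn)
  have hsq : √((n : ℝ) - 1) ^ 2 = (n : ℝ) - 1 := sq_sqrt hpos.le
  have hexp := exp_eq_of_pow_three_eq_smul (sqrt_pos.2 hpos).ne'
    (hsq ▸ starAdj_pow_three (by omega))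
  rw [hexp, starAdj_sq (by omega), hsq]
  simp [vecMulVec_apply]
  ring

section StarEntries

variable {n : ℕ} (hn : 2 ≤ n) {p q : Fin n}
include hn

theorem exp_starAdj_hub_self (hp : p.1 = 0) : exp (starAdj n) p p = cosh √((n : ℝ) - 1) := by
  have hne : (n : ℝ) - 1 ≠ 0 := (sub_pos.2 (Nat.one_lt_cast.2 hn)).ne'
  rw [exp_starAdj_apply hn]
  simp [starAdj, starHub, starLeaves, hp, hne]

theorem exp_starAdj_hub_leaf (hp : p.1 = 0) (hq : q.1 ≠ 0) :
    exp (starAdj n) p q = sinh √((n : ℝ) - 1) / √((n : ℝ) - 1) := by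
  have hpq : p ≠ q := fun h => hq (h ▸ hp)
  rw [exp_starAdj_apply hn]
  simp [starAdj, starHub, starLeaves, hp, hq, hpq]

theorem exp_starAdj_leaf_leaf (hp : p.1 ≠ 0) (hq : q.1 ≠ 0) :
    exp (starAdj n) p q
      = (1 : Matrix (Fin n) (Fin n) ℝ) p q + (cosh √((n : ℝ) - 1) - 1) / ((n : ℝ) - 1) := by
  rw [exp_starAdj_apply hn]
  simp [starAdj, starHub, starLeaves, hp, hq]

theorem starCos_hub_leaf_sq (hp : p.1 = 0) (hq : q.1 ≠ 0) :
    starCos n p q ^ 2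
      = tanh √((n : ℝ) - 1) ^ 2 / (((n : ℝ) - 2) * (1 / cosh √((n : ℝ) - 1)) + 1) := by
  have hpos : (0 : ℝ) < (n : ℝ) - 1 := sub_pos.2 (Nat.one_lt_cast.2 hn)
  have hs : √((n : ℝ) - 1) ≠ 0 := (sqrt_pos.2 hpos).ne'
  have hsq : √((n : ℝ) - 1) ^ 2 = (n : ℝ) - 1 := sq_sqrt hpos.le
  rw [starCos, exp_starAdj_hub_leaf hn hp hq, exp_starAdj_hub_self hn hp,
    exp_starAdj_leaf_leaf hn hq hq, one_apply_eq, tanh_eq_sinh_div_cosh]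
  set s := √((n : ℝ) - 1)
  have hcosh : 1 ≤ cosh s := one_le_cosh s
  have hβ : 0 ≤ (cosh s - 1) / s ^ 2 := div_nonneg (by linarith) (by positivity)
  rw [← hsq, show (n : ℝ) - 2 = s ^ 2 - 1 by linarith, div_pow,
    sq_sqrt (mul_nonneg (cosh_pos s).le (by linarith))]
  field_simp
  ring

theorem starCos_leaf_leaf (hp : p.1 ≠ 0) (hq : q.1 ≠ 0) (hpq : p ≠ q) :
    starCos n p q
      = (cosh √((n : ℝ) - 1) - 1) / (cosh √((n : ℝ) - 1) + (n : ℝ) - 2) := by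
  have hpos : (0 : ℝ) < (n : ℝ) - 1 := sub_pos.2 (Nat.one_lt_cast.2 hn)
  rw [starCos, exp_starAdj_leaf_leaf hn hp hq, exp_starAdj_leaf_leaf hn hp hp,
    exp_starAdj_leaf_leaf hn hq hq, one_apply_eq, one_apply_eq, one_apply_ne hpq]
  set c := cosh √((n : ℝ) - 1)
  have hc : 1 ≤ c := one_le_cosh _
  have hβ : 0 ≤ (c - 1) / ((n : ℝ) - 1) := div_nonneg (by linarith) hpos.le
  rw [sqrt_mul_self (by linarith)]
  field_simp
  ring

end StarEntries

/-- For the star graph `K_{1,n−1}` on `n ≥ 3` vertices with hub vertex `1`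
(index `0`): for every leaf `q`,
`cos² θ_{1q} = tanh²(√(n−1)) / ((n−2) sech(√(n−1)) + 1)`, and for distinct leaves `p, q`,
`cos θ_{pq} = (cosh(√(n−1)) − 1)/(cosh(√(n−1)) + n − 2)`. -/
theorem star_graph_cos_angle (n : ℕ) (hn : 3 ≤ n) :
    (∀ p q : Fin n, p.1 = 0 → q.1 ≠ 0 →
      (starCos n p q) ^ 2
        = Real.tanh (Real.sqrt ((n : ℝ) - 1)) ^ 2
          / (((n : ℝ) - 2) * (1 / Real.cosh (Real.sqrt ((n : ℝ) - 1))) + 1)) ∧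
    (∀ p q : Fin n, p.1 ≠ 0 → q.1 ≠ 0 → p ≠ q →
      starCos n p q
        = (Real.cosh (Real.sqrt ((n : ℝ) - 1)) - 1)
          / (Real.cosh (Real.sqrt ((n : ℝ) - 1)) + (n : ℝ) - 2)) := 
  ⟨fun _ _ => starCos_hub_leaf_sq (by omega), fun _ _ => starCos_leaf_leaf (by omega)⟩
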